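/- arXiv:2212.00524 — 2 statements merged into one kernel-verified Lean document; each statement's English description precedes it below -/
import Mathlib

section
/- Let X₁, …, X_n be independent and identically distributed H-valued random variables with E‖X₁‖⁴ < ∞, and fix h ∈ H and x ∈ ℝ. With X̄_{x,h} := n⁻¹ Σ_{j=1}^n 1{⟨X_j,h⟩ ≤ x} X_j and E_{x,h} := E[1{⟨X₁,h⟩ ≤ x} X₁], one has E[⟨X₁, X̄_{x,h} − E_{x,h}⟩²] ≤ (2/n²) E‖X₁‖⁴ + ((4n−2)/n²) (E‖X₁‖²)². -/
/-!
With `Y_j = 1{⟨X_j, h⟩ ≤ x} X_j`, `m = E Y_1` and `Z_j = ⟨X_1, Y_j - m⟩`, the integrand is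
`n⁻² (∑_j Z_j)²`. For `j ≠ k` one of the two indices, say `k`, differs from `1` and from `j`;
then `Y_k - m` is centred and independent of `(X_1, X_j)`, so `E[Z_j Z_k] = 0` and only the
diagonal survives. Since `‖Y_j‖ ≤ ‖X_j‖` and `‖m‖² ≤ E‖X_1‖²`, `Z_j² ≤ 2‖X_1‖²‖X_j‖² + 2‖m‖²‖X_1‖²`
has expectation at most `2 E‖X_1‖⁴ + 2 (E‖X_1‖²)²` for `j = 1` and, by independence,
`4 (E‖X_1‖²)²` for `j ≠ 1`. Summing the `n` diagonal terms gives the bound.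
-/

open MeasureTheory ProbabilityTheory
open scoped RealInnerProductSpace

section

variable {Ω H : Type*} [MeasurableSpace Ω] {μ : Measure Ω}
  [NormedAddCommGroup H] [InnerProductSpace ℝ H]

theorem integral_sq_sum_eq_sum_integral_sq {ι : Type*} [Fintype ι] {Z : ι → Ω → ℝ}
    (hZ : ∀ i, MemLp (Z i) 2 μ) (horth : Pairwise fun i j => ∫ ω, Z i ω * Z j ω ∂μ = 0) :
    ∫ ω, (∑ i, Z i ω) ^ 2 ∂μ = ∑ i, ∫ ω, Z i ω ^ 2 ∂μ := by
  have hint : ∀ i j, Integrable (fun ω => Z i ω * Z j ω) μ :=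
    fun i j => (hZ i).integrable_mul (hZ j)
  simp_rw [sq, Finset.sum_mul_sum]
  rw [integral_finsetSum _ fun i _ => integrable_finsetSum _ fun j _ => hint i j]
  refine Finset.sum_congr rfl fun i _ => ?_
  rw [integral_finsetSum _ fun j _ => hint i j,
    Finset.sum_eq_single i (fun j _ hji => horth hji.symm) (by simp)]

theorem sq_norm_integral_le_integral_sq_norm [IsProbabilityMeasure μ] {E : Type*}
    [NormedAddCommGroup E] [NormedSpace ℝ E] {Y : Ω → E} (hY : MemLp Y 2 μ) :
    ‖∫ ω, Y ω ∂μ‖ ^ 2 ≤ ∫ ω, ‖Y ω‖ ^ 2 ∂μ := by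
  have hjensen : (∫ ω, ‖Y ω‖ ∂μ) ^ 2 ≤ ∫ ω, ‖Y ω‖ ^ 2 ∂μ := by
    have hvar := variance_nonneg (fun ω => ‖Y ω‖) μ
    rw [variance_eq_sub hY.norm] at hvar
    simpa using hvar
  exact (pow_le_pow_left₀ (norm_nonneg _) (norm_integral_le_integral_norm _) 2).trans hjensen

theorem inner_sub_sq_le_of_norm_le {a b c : H} (m : H) (hbc : ‖b‖ ≤ ‖c‖) :
    ⟪a, b - m⟫ ^ 2 ≤ 2 * (‖a‖ ^ 2 * ‖c‖ ^ 2) + 2 * ‖m‖ ^ 2 * ‖a‖ ^ 2 := by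
  have habs : |⟪a, b - m⟫| ≤ ‖a‖ * (‖c‖ + ‖m‖) :=
    (abs_real_inner_le_norm _ _).trans (by gcongr; exact (norm_sub_le _ _).trans (by gcongr))
  have hsq : ⟪a, b - m⟫ ^ 2 ≤ (‖a‖ * (‖c‖ + ‖m‖)) ^ 2 := sq_le_sq.2 (habs.trans (le_abs_self _))
  nlinarith [mul_nonneg (sq_nonneg ‖a‖) (sq_nonneg (‖c‖ - ‖m‖))]

theorem ProbabilityTheory.IndepFun.integral_inner_eq_zero [CompleteSpace H] [MeasurableSpace H]
    [BorelSpace H] {V W : Ω → H} (hVW : IndepFun V W μ) (hV : Integrable V μ) (hW : Integrable W μ)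
    (hW0 : ∫ ω, W ω ∂μ = 0) : ∫ ω, ⟪V ω, W ω⟫ ∂μ = 0 := by
  have h := hVW.integral_bilin hV hW (innerSL ℝ)
  rw [hW0, map_zero] at h
  exact h

theorem memLp_two_inner_sub {A B C : Ω → H} (m : H) (hA : AEStronglyMeasurable A μ)
    (hB : AEStronglyMeasurable B μ) (hBC : ∀ ω, ‖B ω‖ ≤ ‖C ω‖)
    (hAC : Integrable (fun ω => ‖A ω‖ ^ 2 * ‖C ω‖ ^ 2) μ)
    (hA2 : Integrable (fun ω => ‖A ω‖ ^ 2) μ) :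
    MemLp (fun ω => ⟪A ω, B ω - m⟫) 2 μ := by
  have hmeas : AEStronglyMeasurable (fun ω => ⟪A ω, B ω - m⟫) μ :=
    hA.inner (hB.sub aestronglyMeasurable_const)
  refine (memLp_two_iff_integrable_sq hmeas).2 <|
    ((hAC.const_mul 2).add (hA2.const_mul (2 * ‖m‖ ^ 2))).mono' (hmeas.pow 2)
      (ae_of_all _ fun ω => ?_)
  rw [Real.norm_of_nonneg (sq_nonneg _)]
  exact inner_sub_sq_le_of_norm_le m (hBC ω)

theorem integral_inner_sub_sq_le {A B C : Ω → H} (m : H) (hBC : ∀ ω, ‖B ω‖ ≤ ‖C ω‖)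
    (hAC : Integrable (fun ω => ‖A ω‖ ^ 2 * ‖C ω‖ ^ 2) μ)
    (hA2 : Integrable (fun ω => ‖A ω‖ ^ 2) μ) :
    ∫ ω, ⟪A ω, B ω - m⟫ ^ 2 ∂μ
      ≤ 2 * ∫ ω, ‖A ω‖ ^ 2 * ‖C ω‖ ^ 2 ∂μ + 2 * ‖m‖ ^ 2 * ∫ ω, ‖A ω‖ ^ 2 ∂μ := by
  have hdom := (hAC.const_mul 2).add (hA2.const_mul (2 * ‖m‖ ^ 2))
  rw [← integral_const_mul, ← integral_const_mul, ← integral_add (hAC.const_mul 2)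
    (hA2.const_mul (2 * ‖m‖ ^ 2))]
  exact integral_mono_of_nonneg (ae_of_all _ fun ω => sq_nonneg _) hdom
    (ae_of_all _ fun ω => inner_sub_sq_le_of_norm_le m (hBC ω))

theorem memLp_two_sq_norm {E : Type*} [NormedAddCommGroup E] {Y : Ω → E}
    (hY : AEStronglyMeasurable Y μ) (hY4 : Integrable (fun ω => ‖Y ω‖ ^ 4) μ) :
    MemLp (fun ω => ‖Y ω‖ ^ 2) 2 μ := by
  refine (memLp_two_iff_integrable_sq (by fun_prop)).2 ?_
  simpa only [← pow_mul] using hY4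

theorem integral_sq_norm_mul_sq_norm_of_ne {E ι : Type*} [NormedAddCommGroup E] [MeasurableSpace E]
    [OpensMeasurableSpace E] {X : ι → Ω → E} (hX : ∀ i, Measurable (X i)) (hindep : iIndepFun X μ)
    {i j : ι} (hij : i ≠ j) (hident : IdentDistrib (X j) (X i) μ μ) :
    ∫ ω, ‖X i ω‖ ^ 2 * ‖X j ω‖ ^ 2 ∂μ = (∫ ω, ‖X i ω‖ ^ 2 ∂μ) ^ 2 := by
  have hind : IndepFun (fun ω => ‖X i ω‖ ^ 2) (fun ω => ‖X j ω‖ ^ 2) μ :=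
    (hindep.indepFun hij).comp (measurable_norm.pow_const 2) (measurable_norm.pow_const 2)
  rw [hind.integral_fun_mul_eq_mul_integral ((hX i).norm.pow_const 2).aestronglyMeasurable
    ((hX j).norm.pow_const 2).aestronglyMeasurable, sq]
  exact congrArg _ (hident.comp (measurable_norm.pow_const 2)).integral_eq

theorem integral_inner_sub_sq_le_self {A B : Ω → H} (m : H) (hBA : ∀ ω, ‖B ω‖ ≤ ‖A ω‖)
    (hA4 : Integrable (fun ω => ‖A ω‖ ^ 4) μ) (hA2 : Integrable (fun ω => ‖A ω‖ ^ 2) μ)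
    (hm : ‖m‖ ^ 2 ≤ ∫ ω, ‖A ω‖ ^ 2 ∂μ) :
    ∫ ω, ⟪A ω, B ω - m⟫ ^ 2 ∂μ ≤ 2 * ∫ ω, ‖A ω‖ ^ 4 ∂μ + 2 * (∫ ω, ‖A ω‖ ^ 2 ∂μ) ^ 2 := by
  have h := integral_inner_sub_sq_le m hBA (by simpa only [← pow_add] using hA4) hA2
  have hA2_nonneg : 0 ≤ ∫ ω, ‖A ω‖ ^ 2 ∂μ := integral_nonneg fun ω => by positivity
  simp_rw [← pow_add] at h
  nlinarith

theorem integral_inner_sub_sq_le_of_ne [MeasurableSpace H] [OpensMeasurableSpace H] {ι : Type*}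
    {X : ι → Ω → H} (hX : ∀ i, Measurable (X i)) (hindep : iIndepFun X μ) {i j : ι}
    (hij : i ≠ j) (hident : IdentDistrib (X j) (X i) μ μ) {B : Ω → H} (m : H)
    (hBX : ∀ ω, ‖B ω‖ ≤ ‖X j ω‖) (hprod : Integrable (fun ω => ‖X i ω‖ ^ 2 * ‖X j ω‖ ^ 2) μ)
    (hXi : Integrable (fun ω => ‖X i ω‖ ^ 2) μ) (hm : ‖m‖ ^ 2 ≤ ∫ ω, ‖X i ω‖ ^ 2 ∂μ) :
    ∫ ω, ⟪X i ω, B ω - m⟫ ^ 2 ∂μ ≤ 4 * (∫ ω, ‖X i ω‖ ^ 2 ∂μ) ^ 2 := by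
  have h := integral_inner_sub_sq_le m hBX hprod hXi
  have hXi_nonneg : 0 ≤ ∫ ω, ‖X i ω‖ ^ 2 ∂μ := integral_nonneg fun ω => by positivity
  rw [integral_sq_norm_mul_sq_norm_of_ne hX hindep hij hident] at h
  nlinarith

theorem inner_inv_card_smul_sum_sub {ι : Type*} [Fintype ι] [Nonempty ι] (a m : H) (b : ι → H) :
    ⟪a, (Fintype.card ι : ℝ)⁻¹ • ∑ j, b j - m⟫ = (Fintype.card ι : ℝ)⁻¹ * ∑ j, ⟪a, b j - m⟫ := by
  have hcard : (Fintype.card ι : ℝ) ≠ 0 := Nat.cast_ne_zero.2 Fintype.card_ne_zero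
  rw [← inner_sum, ← real_inner_smul_right, Finset.sum_sub_distrib, Finset.sum_const,
    Finset.card_univ, smul_sub, ← Nat.cast_smul_eq_nsmul ℝ, smul_smul, inv_mul_cancel₀ hcard,
    one_smul]

theorem integral_inner_inv_card_smul_sum_sub_sq {ι : Type*} [Fintype ι] [Nonempty ι]
    {A : Ω → H} {B : ι → Ω → H} (m : H) (hZ : ∀ j, MemLp (fun ω => ⟪A ω, B j ω - m⟫) 2 μ)
    (horth : Pairwise fun j k => ∫ ω, ⟪A ω, B j ω - m⟫ * ⟪A ω, B k ω - m⟫ ∂μ = 0) :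
    ∫ ω, ⟪A ω, (Fintype.card ι : ℝ)⁻¹ • ∑ j, B j ω - m⟫ ^ 2 ∂μ
      = ((Fintype.card ι : ℝ)⁻¹) ^ 2 * ∑ j, ∫ ω, ⟪A ω, B j ω - m⟫ ^ 2 ∂μ := by
  simp_rw [inner_inv_card_smul_sum_sub, mul_pow, integral_const_mul]
  rw [integral_sq_sum_eq_sum_integral_sq hZ horth]

section IID

variable [CompleteSpace H] [MeasurableSpace H] [BorelSpace H] [SecondCountableTopology H]
  [IsProbabilityMeasure μ] {ι : Type*} {X : ι → Ω → H} {f : H → H}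

theorem integral_inner_mul_inner_eq_zero (hX : ∀ i, Measurable (X i)) (hindep : iIndepFun X μ)
    (hf : Measurable f) {m : H} {i j k : ι} (hki : k ≠ i) (hkj : k ≠ j)
    (hXi : MemLp (X i) 2 μ) (hZ : MemLp (fun ω => ⟪X i ω, f (X j ω) - m⟫) 2 μ)
    (hfk : Integrable (fun ω => f (X k ω)) μ) (hm : ∫ ω, f (X k ω) ∂μ = m) :
    ∫ ω, ⟪X i ω, f (X j ω) - m⟫ * ⟪X i ω, f (X k ω) - m⟫ ∂μ = 0 := by
  have hind : IndepFun (fun ω => ⟪X i ω, f (X j ω) - m⟫ • X i ω) (fun ω => f (X k ω) - m) μ :=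
    (hindep.indepFun_prodMk hX i j k hki.symm hkj.symm).comp
      (φ := fun p : H × H => ⟪p.1, f p.2 - m⟫ • p.1) (ψ := fun a => f a - m)
      (by fun_prop) (by fun_prop)
  simp_rw [← real_inner_smul_left]
  refine hind.integral_inner_eq_zero (memLp_one_iff_integrable.1 (hXi.smul hZ))
    (hfk.sub (integrable_const m)) ?_
  rw [integral_sub hfk (integrable_const m), hm, integral_const, probReal_univ, one_smul, sub_self]

theorem pairwise_integral_inner_mul_inner_eq_zero (hX : ∀ i, Measurable (X i))
    (hindep : iIndepFun X μ) (hf : Measurable f) {m : H} {i₀ : ι} (hX₀ : MemLp (X i₀) 2 μ)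
    (hZ : ∀ j, MemLp (fun ω => ⟪X i₀ ω, f (X j ω) - m⟫) 2 μ)
    (hfX : ∀ k, Integrable (fun ω => f (X k ω)) μ) (hm : ∀ k, ∫ ω, f (X k ω) ∂μ = m) :
    Pairwise fun j k => ∫ ω, ⟪X i₀ ω, f (X j ω) - m⟫ * ⟪X i₀ ω, f (X k ω) - m⟫ ∂μ = 0 := by
  intro j k hjk
  by_cases hk : k = i₀
  · subst hk
    simpa only [mul_comm] using
      integral_inner_mul_inner_eq_zero hX hindep hf hjk hjk hX₀ (hZ k) (hfX j) (hm j)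
  · exact integral_inner_mul_inner_eq_zero hX hindep hf hk hjk.symm hX₀ (hZ j) (hfX k) (hm k)

theorem integral_inner_sampleMean_sub_sq_le [Fintype ι] (hX : ∀ i, Measurable (X i))
    (hindep : iIndepFun X μ) {i₀ : ι} (hident : ∀ i, IdentDistrib (X i) (X i₀) μ μ)
    (hX4 : Integrable (fun ω => ‖X i₀ ω‖ ^ 4) μ) (hf : Measurable f)
    (hf_norm : ∀ a, ‖f a‖ ≤ ‖a‖) :
    ∫ ω, ⟪X i₀ ω, (Fintype.card ι : ℝ)⁻¹ • ∑ j, f (X j ω) - ∫ ω', f (X i₀ ω') ∂μ⟫ ^ 2 ∂μ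
      ≤ 2 / (Fintype.card ι : ℝ) ^ 2 * ∫ ω, ‖X i₀ ω‖ ^ 4 ∂μ
        + (4 * (Fintype.card ι : ℝ) - 2) / (Fintype.card ι : ℝ) ^ 2
          * (∫ ω, ‖X i₀ ω‖ ^ 2 ∂μ) ^ 2 := by
  classical
  have : Nonempty ι := ⟨i₀⟩
  set m := ∫ ω, f (X i₀ ω) ∂μ
  set M2 := ∫ ω, ‖X i₀ ω‖ ^ 2 ∂μ
  set M4 := ∫ ω, ‖X i₀ ω‖ ^ 4 ∂μ
  have hsq (i : ι) : MemLp (fun ω => ‖X i ω‖ ^ 2) 2 μ :=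
    memLp_two_sq_norm (hX i).aestronglyMeasurable
      (((hident i).symm.comp (measurable_norm.pow_const 4)).integrable_snd hX4)
  have hX2 (i : ι) : MemLp (X i) 2 μ :=
    (memLp_two_iff_integrable_sq_norm (hX i).aestronglyMeasurable).2 ((hsq i).integrable one_le_two)
  have hfX (i : ι) : MemLp (fun ω => f (X i ω)) 2 μ :=
    (hX2 i).mono (hf.comp (hX i)).aestronglyMeasurable (ae_of_all _ fun ω => hf_norm _)
  have hm (i : ι) : ∫ ω, f (X i ω) ∂μ = m := ((hident i).comp hf).integral_eq
  have hm_sq : ‖m‖ ^ 2 ≤ M2 :=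
    (sq_norm_integral_le_integral_sq_norm (hfX i₀)).trans <|
      integral_mono (hfX i₀).integrable_norm_pow' ((hsq i₀).integrable one_le_two)
        fun ω => by gcongr; exact hf_norm _
  have hprod (j : ι) : Integrable (fun ω => ‖X i₀ ω‖ ^ 2 * ‖X j ω‖ ^ 2) μ :=
    (hsq i₀).integrable_mul (hsq j)
  have hZ (j : ι) : MemLp (fun ω => ⟪X i₀ ω, f (X j ω) - m⟫) 2 μ :=
    memLp_two_inner_sub m (hX i₀).aestronglyMeasurable (hfX j).aestronglyMeasurable
      (fun ω => hf_norm _) (hprod j) ((hsq i₀).integrable one_le_two)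
  have hdiag (j : ι) :
      ∫ ω, ⟪X i₀ ω, f (X j ω) - m⟫ ^ 2 ∂μ
        ≤ 4 * M2 ^ 2 + if j = i₀ then 2 * (M4 - M2 ^ 2) else 0 := by
    split_ifs with hj
    · subst hj
      linarith [integral_inner_sub_sq_le_self m (fun ω => hf_norm (X j ω)) hX4
        ((hsq j).integrable one_le_two) hm_sq]
    · simpa only [add_zero] using
        integral_inner_sub_sq_le_of_ne hX hindep (Ne.symm hj) (hident j) m
          (fun ω => hf_norm (X j ω)) (hprod j) ((hsq i₀).integrable one_le_two) hm_sq
  rw [integral_inner_inv_card_smul_sum_sub_sq m hZ <| pairwise_integral_inner_mul_inner_eq_zero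
    hX hindep hf (hX2 i₀) hZ (fun k => (hfX k).integrable one_le_two) hm]
  calc _ ≤ ((Fintype.card ι : ℝ)⁻¹) ^ 2 *
          ∑ j, (4 * M2 ^ 2 + if j = i₀ then 2 * (M4 - M2 ^ 2) else 0) := by
        gcongr with j; exact hdiag j
    _ = _ := by
        have hcard : (Fintype.card ι : ℝ) ≠ 0 := Nat.cast_ne_zero.2 Fintype.card_ne_zero
        simp only [Finset.sum_add_distrib, Finset.sum_ite_eq', Finset.mem_univ, if_true,
          Finset.sum_const, Finset.card_univ, nsmul_eq_mul]
        field_simp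
        ring

end IID

end

/-- For i.i.d. `H`-valued `X₁,…,X_n` with `E‖X₁‖⁴ < ∞`, fixed `h ∈ H`
and `x ∈ ℝ`, with `X̄_{x,h} = n⁻¹ ∑_j 1{⟨X_j,h⟩≤x} X_j` and
`E_{x,h} = E[1{⟨X₁,h⟩≤x} X₁]`, one has
`E⟨X₁, X̄_{x,h} − E_{x,h}⟩² ≤ (2/n²) E‖X₁‖⁴ + ((4n−2)/n²) (E‖X₁‖²)²`. -/
theorem projected_mean_second_moment_bound
    {Ω : Type*} [MeasureSpace Ω] [IsProbabilityMeasure (ℙ : Measure Ω)]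
    {H : Type*} [NormedAddCommGroup H] [InnerProductSpace ℝ H] [CompleteSpace H]
    [TopologicalSpace.SeparableSpace H] [MeasurableSpace H] [BorelSpace H]
    {n : ℕ} (hn : 1 ≤ n)
    (X : Fin n → Ω → H) (hXmeas : ∀ i, Measurable (X i))
    -- independent and identically distributed
    (hindep : iIndepFun X ℙ)
    (hident : ∀ i, Measure.map (X i) ℙ = Measure.map (X ⟨0, by omega⟩) ℙ)
    -- E‖X₁‖⁴ < ∞
    (hX4 : Integrable (fun ω => ‖X ⟨0, by omega⟩ ω‖ ^ 4) ℙ)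
    (h : H) (x : ℝ) :
    (∫ ω, ⟪X ⟨0, by omega⟩ ω,
        ((n : ℝ)⁻¹ • ∑ j : Fin n, (if ⟪X j ω, h⟫ ≤ x then X j ω else 0))
          - (∫ ω', (if ⟪X ⟨0, by omega⟩ ω', h⟫ ≤ x then X ⟨0, by omega⟩ ω' else 0) ∂ℙ)⟫ ^ 2 ∂ℙ)
      ≤ (2 / (n : ℝ) ^ 2) * (∫ ω, ‖X ⟨0, by omega⟩ ω‖ ^ 4 ∂ℙ)
        + ((4 * (n : ℝ) - 2) / (n : ℝ) ^ 2) * (∫ ω, ‖X ⟨0, by omega⟩ ω‖ ^ 2 ∂ℙ) ^ 2 := by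
  have : SecondCountableTopology H := UniformSpace.secondCountable_of_separable H
  have hf : Measurable fun a : H => if ⟪a, h⟫ ≤ x then a else 0 :=
    Measurable.ite (measurableSet_le (by fun_prop) measurable_const) measurable_id measurable_const
  have hf_norm (a : H) : ‖if ⟪a, h⟫ ≤ x then a else 0‖ ≤ ‖a‖ := by
    split_ifs <;> simp
  simpa only [Fintype.card_fin] using integral_inner_sampleMean_sub_sq_le hXmeas hindep
    (fun i => ⟨(hXmeas i).aemeasurable, (hXmeas _).aemeasurable, hident i⟩) hX4 hf hf_norm
end

section
/- Let W be a real random variable and X an H-valued random variable with E‖X‖² < ∞, and let D be any H-valued random variable on the same probability space with E‖D‖⁴ < ∞ (no independence between D and (W,X) is assumed). For u ∈ ℝ define g(u) := E[1{W ≤ u} X] ∈ H (a Bochner integral), F(u) := E[1{W ≤ u} ‖X‖²] ∈ ℝ, and the random variable T(u) := ⟨g(u), D⟩. Then for all real numbers u₁ ≤ u ≤ u₂: E[ (T(u) − T(u₁))² (T(u₂) − T(u))² ] ≤ E[‖D‖⁴] · (F(u) − F(u₁)) · (F(u₂) − F(u)) ≤ E[‖D‖⁴] · (F(u₂) − F(u₁))².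 -/
open MeasureTheory ProbabilityTheory Filter
open scoped RealInnerProductSpace

/-!
The increment `g b - g a` is the mean of `1{a < W ≤ b} X`, so by Jensen its squared norm is at
most `F b - F a`. Cauchy–Schwarz in `H` then bounds `(T b - T a)²` pointwise by
`(F b - F a) ‖D‖²`; since the bound holds for every `ω`, no independence between `D` and
`(W, X)` is needed, and integrating the product of two such bounds gives the claim.
-/

section

variable {Ω E : Type*} [MeasurableSpace Ω] {μ : Measure Ω} [IsProbabilityMeasure μ]
  [NormedAddCommGroup E] [NormedSpace ℝ E]

lemma norm_integral_sq_le_integral_norm_sq {f : Ω → E} (hf : MemLp f 2 μ) :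
    ‖∫ ω, f ω ∂μ‖ ^ 2 ≤ ∫ ω, ‖f ω‖ ^ 2 ∂μ := by
  have hvar := variance_nonneg (fun ω => ‖f ω‖) μ
  rw [variance_eq_sub hf.norm, sub_nonneg] at hvar
  calc ‖∫ ω, f ω ∂μ‖ ^ 2 ≤ (∫ ω, ‖f ω‖ ∂μ) ^ 2 := by
        gcongr; exact norm_integral_le_integral_norm f
    _ ≤ ∫ ω, ‖f ω‖ ^ 2 ∂μ := hvar

lemma norm_integral_indicator_sub_sq_le {s t : Set Ω} (hs : MeasurableSet s)
    (ht : MeasurableSet t) (hst : s ⊆ t) {X : Ω → E} (hX : MemLp X 2 μ) :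
    ‖∫ ω, t.indicator X ω ∂μ - ∫ ω, s.indicator X ω ∂μ‖ ^ 2 ≤
      ∫ ω, t.indicator (fun ω => ‖X ω‖ ^ 2) ω ∂μ - ∫ ω, s.indicator (fun ω => ‖X ω‖ ^ 2) ω ∂μ := by
  have hX1 := hX.integrable one_le_two
  have hX2 := hX.integrable_norm_pow two_ne_zero
  have hdiff : ∀ ω, t.indicator X ω - s.indicator X ω = (t \ s).indicator X ω := fun ω => by
    rw [Set.indicator_sdiff hst, Pi.sub_apply]
  have hdiff_sq : ∀ ω, t.indicator (fun ω => ‖X ω‖ ^ 2) ω - s.indicator (fun ω => ‖X ω‖ ^ 2) ω =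
      ‖(t \ s).indicator X ω‖ ^ 2 := fun ω => by
    rw [← Pi.sub_apply, ← Set.indicator_sdiff hst]
    by_cases h : ω ∈ t \ s <;> simp [h]
  rw [← integral_sub (hX1.indicator ht) (hX1.indicator hs),
    ← integral_sub (hX2.indicator ht) (hX2.indicator hs)]
  simp only [hdiff, hdiff_sq]
  exact norm_integral_sq_le_integral_norm_sq (hX.indicator (ht.diff hs))

end

lemma real_inner_sq_le_norm_sq_mul_norm_sq {H : Type*} [NormedAddCommGroup H]
    [InnerProductSpace ℝ H] (x y : H) :
    ⟪x, y⟫ ^ 2 ≤ ‖x‖ ^ 2 * ‖y‖ ^ 2 := by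
  rw [← mul_pow, ← sq_abs]
  gcongr
  exact abs_real_inner_le_norm x y

lemma integral_inner_sq_mul_inner_sq_le {Ω H : Type*} [MeasurableSpace Ω] {μ : Measure Ω}
    [NormedAddCommGroup H] [InnerProductSpace ℝ H] {D : Ω → H}
    (hD4 : Integrable (fun ω => ‖D ω‖ ^ 4) μ) (x y : H) :
    ∫ ω, ⟪x, D ω⟫ ^ 2 * ⟪y, D ω⟫ ^ 2 ∂μ ≤ ‖x‖ ^ 2 * ‖y‖ ^ 2 * ∫ ω, ‖D ω‖ ^ 4 ∂μ := by
  rw [← integral_const_mul]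
  refine integral_mono_of_nonneg (ae_of_all _ fun ω => by positivity) (hD4.const_mul _)
    (ae_of_all _ fun ω => ?_)
  calc ⟪x, D ω⟫ ^ 2 * ⟪y, D ω⟫ ^ 2 ≤ (‖x‖ ^ 2 * ‖D ω‖ ^ 2) * (‖y‖ ^ 2 * ‖D ω‖ ^ 2) := by
        gcongr <;> exact real_inner_sq_le_norm_sq_mul_norm_sq _ _
    _ = ‖x‖ ^ 2 * ‖y‖ ^ 2 * ‖D ω‖ ^ 4 := by ring

theorem increment_fourth_moment_bound_general
    {Ω : Type*} [MeasureSpace Ω] [IsProbabilityMeasure (ℙ : Measure Ω)]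
    {H : Type*} [NormedAddCommGroup H] [InnerProductSpace ℝ H]
    [TopologicalSpace.SeparableSpace H] [MeasurableSpace H] [BorelSpace H]
    (W : Ω → ℝ) (hW : Measurable W)
    (X : Ω → H) (hX : Measurable X)
    (hX2 : Integrable (fun ω => ‖X ω‖ ^ 2) ℙ)
    (D : Ω → H)
    (hD4 : Integrable (fun ω => ‖D ω‖ ^ 4) ℙ)
    -- g(u) = E[1{W ≤ u} X],  F(u) = E[1{W ≤ u} ‖X‖²],  T(u)(ω) = ⟨g(u), D(ω)⟩
    (g : ℝ → H) (hg : ∀ u, g u = ∫ ω, (if W ω ≤ u then X ω else 0) ∂ℙ)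
    (F : ℝ → ℝ) (hF : ∀ u, F u = ∫ ω, (if W ω ≤ u then ‖X ω‖ ^ 2 else 0) ∂ℙ)
    (T : ℝ → Ω → ℝ) (hT : ∀ u ω, T u ω = ⟪g u, D ω⟫)
    (u₁ u u₂ : ℝ) (h₁ : u₁ ≤ u) (h₂ : u ≤ u₂) :
    (∫ ω, (T u ω - T u₁ ω) ^ 2 * (T u₂ ω - T u ω) ^ 2 ∂ℙ)
      ≤ (∫ ω, ‖D ω‖ ^ 4 ∂ℙ) * (F u - F u₁) * (F u₂ - F u) ∧
    (∫ ω, ‖D ω‖ ^ 4 ∂ℙ) * (F u - F u₁) * (F u₂ - F u)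
      ≤ (∫ ω, ‖D ω‖ ^ 4 ∂ℙ) * (F u₂ - F u₁) ^ 2 := by
  have hXL2 : MemLp X 2 ℙ := (memLp_two_iff_integrable_sq_norm hX.aestronglyMeasurable).2 hX2
  have hincr : ∀ {a b}, a ≤ b → ‖g b - g a‖ ^ 2 ≤ F b - F a := fun {a b} hab => by
    have := norm_integral_indicator_sub_sq_le (measurableSet_le hW measurable_const)
      (measurableSet_le hW measurable_const) (fun ω (h : W ω ≤ a) => h.trans hab) hXL2
    simpa only [hg, hF, Set.indicator_apply, Set.mem_ofPred_eq] using this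
  have hA := hincr h₁
  have hB := hincr h₂
  have hA₀ : 0 ≤ F u - F u₁ := (sq_nonneg _).trans hA
  have hB₀ : 0 ≤ F u₂ - F u := (sq_nonneg _).trans hB
  have hTD : ∀ ω, (T u ω - T u₁ ω) ^ 2 * (T u₂ ω - T u ω) ^ 2 =
      ⟪g u - g u₁, D ω⟫ ^ 2 * ⟪g u₂ - g u, D ω⟫ ^ 2 := fun ω => by
    simp only [hT, inner_sub_left]
  constructor
  · calc ∫ ω, (T u ω - T u₁ ω) ^ 2 * (T u₂ ω - T u ω) ^ 2 ∂ℙ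
        ≤ ‖g u - g u₁‖ ^ 2 * ‖g u₂ - g u‖ ^ 2 * ∫ ω, ‖D ω‖ ^ 4 ∂ℙ := by
          simpa only [hTD] using integral_inner_sq_mul_inner_sq_le hD4 (g u - g u₁) (g u₂ - g u)
      _ ≤ (F u - F u₁) * (F u₂ - F u) * ∫ ω, ‖D ω‖ ^ 4 ∂ℙ := by gcongr
      _ = _ := by ring
  · rw [mul_assoc]
    gcongr
    nlinarith

/-- With `g(u) = E[1{W≤u} X]`, `F(u) = E[1{W≤u}‖X‖²]` and
`T(u) = ⟨g(u), D⟩`, for `u₁ ≤ u ≤ u₂`,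
`E[(T(u)−T(u₁))²(T(u₂)−T(u))²] ≤ E‖D‖⁴ (F(u)−F(u₁))(F(u₂)−F(u)) ≤ E‖D‖⁴ (F(u₂)−F(u₁))²`. -/
theorem increment_fourth_moment_bound
    {Ω : Type*} [MeasureSpace Ω] [IsProbabilityMeasure (ℙ : Measure Ω)]
    {H : Type*} [NormedAddCommGroup H] [InnerProductSpace ℝ H] [CompleteSpace H]
    [TopologicalSpace.SeparableSpace H] [MeasurableSpace H] [BorelSpace H]
    (W : Ω → ℝ) (hW : Measurable W)
    (X : Ω → H) (hX : Measurable X)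
    (hX2 : Integrable (fun ω => ‖X ω‖ ^ 2) ℙ)
    (D : Ω → H) (hD : Measurable D)
    (hD4 : Integrable (fun ω => ‖D ω‖ ^ 4) ℙ)
    -- g(u) = E[1{W ≤ u} X],  F(u) = E[1{W ≤ u} ‖X‖²],  T(u)(ω) = ⟨g(u), D(ω)⟩
    (g : ℝ → H) (hg : ∀ u, g u = ∫ ω, (if W ω ≤ u then X ω else 0) ∂ℙ)
    (F : ℝ → ℝ) (hF : ∀ u, F u = ∫ ω, (if W ω ≤ u then ‖X ω‖ ^ 2 else 0) ∂ℙ)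
    (T : ℝ → Ω → ℝ) (hT : ∀ u ω, T u ω = ⟪g u, D ω⟫)
    (u₁ u u₂ : ℝ) (h₁ : u₁ ≤ u) (h₂ : u ≤ u₂) :
    (∫ ω, (T u ω - T u₁ ω) ^ 2 * (T u₂ ω - T u ω) ^ 2 ∂ℙ)
      ≤ (∫ ω, ‖D ω‖ ^ 4 ∂ℙ) * (F u - F u₁) * (F u₂ - F u) ∧
    (∫ ω, ‖D ω‖ ^ 4 ∂ℙ) * (F u - F u₁) * (F u₂ - F u)
      ≤ (∫ ω, ‖D ω‖ ^ 4 ∂ℙ) * (F u₂ - F u₁) ^ 2 :=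
  increment_fourth_moment_bound_general W hW X hX hX2 D hD4 g hg F hF T hT u₁ u u₂ h₁ h₂
end
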